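/- Let (X,τ) be a T₁ topological space and A ⊆ X a set that is not open in τ. For every neighbourhood assignment x ↦ U_x (x ∈ A \ interior(A), U_x open, x ∈ U_x) with generated ideal I_A, there exists another neighbourhood assignment x ↦ Ũ_x (Ũ_x open, x ∈ Ũ_x) whose generated ideal Ĩ_A is a strict subset of I_A, and A is open in the topology generated by {V \ I : V open in τ, I ∈ Ĩ_A}. Consequently there is no minimal ideal of this form making A open in the induced topology. -/

import Mathlib

/-! Since `A` is not open, some boundary point `x₀ ∈ A \ interior A` has `U x₀ ⊄ A`; pick
`y ∈ U x₀ \ A`. The assignment `U' x := U x \ {y}` is still open (points are closed) and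
pointed, but `{y}` now lies in the old ideal and not in the new one. The new ideal still makes
`A` open: `A` is the union of `interior A` and the sets `U' x \ (U' x \ A) = U' x ∩ A`. -/

open TopologicalSpace Set Topology

/-- The ideal generated by the sets `U x \ A` for `x ∈ A \ interior A`. -/
def genIdeal {X : Type*} [TopologicalSpace X] (A : Set X) (U : X → Set X) : Set (Set X) :=
  {S | ∃ F : Finset X, ↑F ⊆ A \ interior A ∧ S ⊆ ⋃ x ∈ F, U x \ A}

/-- The topology `τ*` generated by `{V \ I : V open, I in the ideal}`. -/
def starTop {X : Type*} [TopologicalSpace X] (I : Set (Set X)) : TopologicalSpace X :=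
  generateFrom {s | ∃ V J, IsOpen V ∧ J ∈ I ∧ s = V \ J}

section GenIdeal

variable {X : Type*} [TopologicalSpace X] {A : Set X} {U U' : X → Set X}

theorem empty_mem_genIdeal : ∅ ∈ genIdeal A U :=
  ⟨∅, by simp, empty_subset _⟩

theorem sdiff_mem_genIdeal {x : X} (hx : x ∈ A \ interior A) : U x \ A ∈ genIdeal A U :=
  ⟨{x}, by simpa using hx, by simp⟩

theorem mem_genIdeal_of_subset {S T : Set X} (hS : S ∈ genIdeal A U) (hTS : T ⊆ S) :
    T ∈ genIdeal A U :=
  let ⟨F, hF, hSF⟩ := hS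
  ⟨F, hF, hTS.trans hSF⟩

theorem subset_iUnion_of_mem_genIdeal {S : Set X} (hS : S ∈ genIdeal A U) :
    S ⊆ ⋃ x ∈ A \ interior A, U x := by
  obtain ⟨F, hF, hSF⟩ := hS
  exact hSF.trans (iUnion₂_subset fun x hx =>
    sdiff_subset.trans (subset_biUnion_of_mem (u := U) (hF hx)))

theorem genIdeal_mono (h : ∀ x ∈ A \ interior A, U' x ⊆ U x) :
    genIdeal A U' ⊆ genIdeal A U := by
  rintro S ⟨F, hF, hSF⟩
  exact ⟨F, hF, hSF.trans (iUnion₂_mono fun x hx => sdiff_subset_sdiff_left (h x (hF hx)))⟩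

theorem exists_sdiff_nonempty_of_not_isOpen (hA : ¬ IsOpen A)
    (hUopen : ∀ x ∈ A \ interior A, IsOpen (U x)) (hUmem : ∀ x ∈ A \ interior A, x ∈ U x) :
    ∃ x ∈ A \ interior A, (U x \ A).Nonempty := by
  obtain ⟨x, hxA, hxi⟩ : (A \ interior A).Nonempty :=
    sdiff_nonempty.mpr fun h => hA (interior_subset.antisymm h ▸ isOpen_interior)
  refine ⟨x, ⟨hxA, hxi⟩, sdiff_nonempty.mpr fun hsub => hxi ?_⟩
  exact mem_interior.mpr ⟨U x, hsub, hUopen x ⟨hxA, hxi⟩, hUmem x ⟨hxA, hxi⟩⟩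

end GenIdeal

section StarTop

variable {X : Type*} [TopologicalSpace X] {I : Set (Set X)}

theorem isOpen_starTop_sdiff {V J : Set X} (hV : IsOpen V) (hJ : J ∈ I) :
    IsOpen[starTop I] (V \ J) :=
  isOpen_generateFrom_of_mem ⟨V, J, hV, hJ, rfl⟩

theorem isOpen_starTop_genIdeal {A : Set X} {U : X → Set X}
    (hUopen : ∀ x ∈ A \ interior A, IsOpen (U x)) (hUmem : ∀ x ∈ A \ interior A, x ∈ U x) :
    IsOpen[starTop (genIdeal A U)] A := by
  convert @IsOpen.union X _ _ (starTop _)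
    (isOpen_starTop_sdiff isOpen_interior empty_mem_genIdeal)
    (@isOpen_biUnion X _ (starTop _) _ _ fun x hx =>
      isOpen_starTop_sdiff (hUopen x hx) (sdiff_mem_genIdeal hx)) using 1
  ext a
  simp only [sdiff_empty, sdiff_sdiff_right_self, mem_union, mem_iUnion, mem_inter_iff,
    mem_sdiff, exists_prop]
  refine ⟨fun ha => ?_, ?_⟩
  · by_cases hai : a ∈ interior A
    · exact Or.inl hai
    · exact Or.inr ⟨a, ⟨ha, hai⟩, hUmem a ⟨ha, hai⟩, ha⟩
  · rintro (hai | ⟨x, -, -, ha⟩)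
    exacts [interior_subset hai, ha]

end StarTop

theorem stmt4 {X : Type*} [TopologicalSpace X] [T1Space X] (A : Set X) (hA : ¬ IsOpen A)
    (U : X → Set X)
    (hUopen : ∀ x ∈ A \ interior A, IsOpen (U x))
    (hUmem : ∀ x ∈ A \ interior A, x ∈ U x) :
    ∃ U' : X → Set X,
      (∀ x ∈ A \ interior A, IsOpen (U' x)) ∧
      (∀ x ∈ A \ interior A, x ∈ U' x) ∧
      genIdeal A U' ⊂ genIdeal A U ∧
      IsOpen[starTop (genIdeal A U')] A := by
  obtain ⟨x₀, hx₀, y, hyU, hyA⟩ := exists_sdiff_nonempty_of_not_isOpen hA hUopen hUmem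
  have hU'open : ∀ x ∈ A \ interior A, IsOpen (U x \ {y}) := fun x hx =>
    (hUopen x hx).sdiff isClosed_singleton
  have hU'mem : ∀ x ∈ A \ interior A, x ∈ U x \ {y} := fun x hx =>
    ⟨hUmem x hx, fun hxy => hyA (hxy ▸ hx.1)⟩
  have hy_mem : {y} ∈ genIdeal A U :=
    mem_genIdeal_of_subset (sdiff_mem_genIdeal hx₀) (singleton_subset_iff.mpr ⟨hyU, hyA⟩)
  refine ⟨fun x => U x \ {y}, hU'open, hU'mem,
    ssubset_of_subset_not_subset (genIdeal_mono fun _ _ => sdiff_subset) fun hsub => ?_,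
    isOpen_starTop_genIdeal hU'open hU'mem⟩
  obtain ⟨x, -, -, hxy⟩ := mem_iUnion₂.mp (subset_iUnion_of_mem_genIdeal (hsub hy_mem) rfl)
  exact hxy rfl
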